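/- arXiv:2105.03781 — 2 statements merged into one kernel-verified Lean document; each statement's English description precedes it below -/
import Mathlib

section
/- Let p be a probability measure on ℝ^d, let U be the uniform probability measure on [0, 2π], and fix x, x' ∈ ℝ^d. Then with respect to the product measure p ⊗ U on pairs (ω, b), the expectation of 2 cos(⟨ω, x⟩ + b) · cos(⟨ω, x'⟩ + b) equals ∫_{ℝ^d} cos⟨ω, x − x'⟩ dp(ω), i.e., the random Fourier feature product is an unbiased estimator of the kernel k(x, x') = ∫ cos⟨ω, x − x'⟩ dp(ω). -/
open MeasureTheory Real
open scoped RealInnerProductSpace ProbabilityTheory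

/-! Product-to-sum turns `2 cos(⟨ω, x⟩ + b) cos(⟨ω, x'⟩ + b)` into
`cos ⟨ω, x - x'⟩ + cos (⟨ω, x + x'⟩ + 2b)`. The first summand does not depend on the phase `b`,
and the second one averages to zero over a full period of `b`, for every `ω`, by Fubini. -/

lemma intervalIntegral_cos_add_int_mul_eq_zero (c : ℝ) {n : ℤ} (hn : n ≠ 0) :
    ∫ b in (0 : ℝ)..2 * π, cos (c + n * b) = 0 := by
  have hn' : (n : ℝ) ≠ 0 := Int.cast_ne_zero.mpr hn
  simp_rw [add_comm c]
  rw [intervalIntegral.integral_comp_mul_add cos hn', integral_cos, mul_zero, zero_add,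
    add_comm _ c, sin_add_int_mul_two_pi, sub_self, smul_zero]

lemma integral_cos_add_two_mul_uniform (c : ℝ) :
    ∫ b, cos (c + 2 * b) ∂(volume[|Set.Icc 0 (2 * π)]) = 0 := by
  rw [ProbabilityTheory.cond, integral_smul_measure, integral_Icc_eq_integral_Ioc,
    ← intervalIntegral.integral_of_le (by positivity)]
  simpa using Or.inr (intervalIntegral_cos_add_int_mul_eq_zero c (n := 2) two_ne_zero)

section PhaseAveraging

variable {α : Type*} [MeasurableSpace α] {μ : Measure α} [IsFiniteMeasure μ]
  {ν : Measure ℝ} [IsProbabilityMeasure ν]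

lemma integrable_cos_comp_prod {h : α × ℝ → ℝ} (hh : Measurable h) :
    Integrable (fun z => cos (h z)) (μ.prod ν) :=
  .of_bound (continuous_cos.measurable.comp hh).aestronglyMeasurable 1
    (.of_forall fun z => by simpa using abs_cos_le_one (h z))

theorem integral_prod_two_mul_cos_mul_cos {f g : α → ℝ} (hf : Measurable f) (hg : Measurable g)
    (hν : ∀ c, ∫ b, cos (c + 2 * b) ∂ν = 0) :
    ∫ z, 2 * cos (f z.1 + z.2) * cos (g z.1 + z.2) ∂(μ.prod ν) = ∫ a, cos (f a - g a) ∂μ := by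
  have hdiff : Integrable (fun z : α × ℝ => cos (f z.1 - g z.1)) (μ.prod ν) :=
    integrable_cos_comp_prod ((hf.comp measurable_fst).sub (hg.comp measurable_fst))
  have hsum : Integrable (fun z : α × ℝ => cos (f z.1 + g z.1 + 2 * z.2)) (μ.prod ν) :=
    integrable_cos_comp_prod (((hf.comp measurable_fst).add (hg.comp measurable_fst)).add
      (measurable_snd.const_mul 2))
  have hsplit : ∀ z : α × ℝ, 2 * cos (f z.1 + z.2) * cos (g z.1 + z.2)
      = cos (f z.1 - g z.1) + cos (f z.1 + g z.1 + 2 * z.2) := fun z => by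
    rw [two_mul_cos_mul_cos]
    congr 2 <;> ring
  have hphase : ∫ z, cos (f z.1 + g z.1 + 2 * z.2) ∂(μ.prod ν) = 0 := by
    simp [integral_prod _ hsum, hν]
  simp_rw [hsplit]
  rw [integral_add hdiff hsum, hphase, add_zero, integral_fun_fst (fun a => cos (f a - g a)),
    probReal_univ, one_smul]

end PhaseAveraging

/-- Unbiasedness of random Fourier features: for a probability measure `p` on ℝ^d and
the uniform measure `U` on `[0, 2π]`, the expectation of
`2 cos(⟨ω,x⟩+b) cos(⟨ω,x'⟩+b)` under `p ⊗ U` equals `∫ cos⟨ω, x-x'⟩ dp(ω)`. -/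
theorem rff_unbiased (d : ℕ)
    (p : Measure (EuclideanSpace ℝ (Fin d))) [IsProbabilityMeasure p]
    (U : Measure ℝ)
    (hU : U = (ENNReal.ofReal (2 * Real.pi))⁻¹ • volume.restrict (Set.Icc 0 (2 * Real.pi)))
    (x x' : EuclideanSpace ℝ (Fin d)) :
    ∫ ωb : EuclideanSpace ℝ (Fin d) × ℝ,
        2 * Real.cos (⟪ωb.1, x⟫ + ωb.2) * Real.cos (⟪ωb.1, x'⟫ + ωb.2) ∂(p.prod U) =
      ∫ ω, Real.cos ⟪ω, x - x'⟫ ∂p := by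
  have hU_cond : U = volume[|Set.Icc 0 (2 * π)] := by
    rw [hU, ProbabilityTheory.cond, Real.volume_Icc, sub_zero]
  have : IsProbabilityMeasure (volume[|Set.Icc 0 (2 * π)]) :=
    ProbabilityTheory.cond_isProbabilityMeasure_of_finite (by simp [pi_pos]) measure_Icc_lt_top.ne
  rw [hU_cond]
  simp_rw [inner_sub_right]
  exact integral_prod_two_mul_cos_mul_cos (f := fun ω => ⟪ω, x⟫) (g := fun ω => ⟪ω, x'⟫)
    (by fun_prop) (by fun_prop) integral_cos_add_two_mul_uniform
end

section
/- Let m ∈ ℕ and let s, t : ℝ^m → ℝ^m be differentiable functions. Define F : ℝ^m × ℝ^m → ℝ^m × ℝ^m by F(x₁, x₂) = (x₁, x₂ ⊙ exp(s(x₁)) + t(x₁)), with componentwise multiplication ⊙ and componentwise exp. Then F is differentiable at every point (x₁, x₂), and the determinant of its derivative satisfies det DF(x₁, x₂) = ∏_{j=1}^m exp(s_j(x₁)) = exp(Σ_{j=1}^m s_j(x₁)); in particular det DF(x₁, x₂) > 0 and log det DF(x₁, x₂) = Σ_{j=1}^m s_j(x₁). -/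
/-! Since `F` fixes `x₁`, its derivative is block lower triangular, so its determinant is that of
the derivative of the fibre map `x₂ ↦ x₂ ⊙ exp (s x₁) + t x₁`, i.e. of `diag (exp (s x₁))`;
the derivatives of `s` and `t` only enter the off-diagonal block. -/

open LinearMap in
theorem LinearMap.det_eq_det_snd_comp_comp_inr {R M N : Type*} [CommRing R]
    [AddCommGroup M] [Module R M] [Module.Free R M] [Module.Finite R M]
    [AddCommGroup N] [Module R N] [Module.Free R N] [Module.Finite R N]
    (f : Module.End R (M × N)) (hf : fst R M N ∘ₗ f = fst R M N) :
    f.det = (snd R M N ∘ₗ f ∘ₗ inr R M N).det := by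
  classical
  let bM := Module.Free.chooseBasis R M
  let bN := Module.Free.chooseBasis R N
  have hf_apply : ∀ p, (f p).1 = p.1 := fun p => LinearMap.congr_fun hf p
  have hmat : toMatrix (bM.prod bN) (bM.prod bN) f = Matrix.fromBlocks 1 0
      (Matrix.of fun i k => bN.repr (f (bM k, 0)).2 i)
      (toMatrix bN bN (snd R M N ∘ₗ f ∘ₗ inr R M N)) := by
    ext (i | i) (k | k) <;>
      simp [toMatrix_apply, hf_apply, Matrix.one_apply, Finsupp.single_apply, eq_comm]
  rw [← det_toMatrix (bM.prod bN), hmat, Matrix.det_fromBlocks_zero₁₂, Matrix.det_one, one_mul,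
    det_toMatrix]

open ContinuousLinearMap in
theorem det_fderiv_eq_det_fderiv_snd_of_fst_eq {𝕜 E F : Type*} [NontriviallyNormedField 𝕜]
    [NormedAddCommGroup E] [NormedSpace 𝕜 E] [FiniteDimensional 𝕜 E]
    [NormedAddCommGroup F] [NormedSpace 𝕜 F] [FiniteDimensional 𝕜 F]
    {T : E × F → E × F} {x : E} {y : F} (hT : DifferentiableAt 𝕜 T (x, y))
    (hfst : ∀ q, (T q).1 = q.1) :
    (fderiv 𝕜 T (x, y)).det = (fderiv 𝕜 (fun y' => (T (x, y')).2) y).det := by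
  have hfst_comp : fst 𝕜 E F ∘L fderiv 𝕜 T (x, y) = fst 𝕜 E F := by
    have hT_fst : (fun q => (T q).1) = Prod.fst := funext hfst
    exact hT.hasFDerivAt.fst.unique (by rw [hT_fst]; exact hasFDerivAt_fst)
  have hfiber :
      fderiv 𝕜 (fun y' => (T (x, y')).2) y = snd 𝕜 E F ∘L fderiv 𝕜 T (x, y) ∘L inr 𝕜 E F :=
    (hT.hasFDerivAt.comp y (hasFDerivAt_prodMk_right x y)).snd.fderiv
  rw [hfiber]
  exact LinearMap.det_eq_det_snd_comp_comp_inr _ (congrArg toLinearMap hfst_comp)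

theorem det_fderiv_mul_add_const {ι 𝕜 : Type*} [Fintype ι] [NontriviallyNormedField 𝕜]
    (e c y : ι → 𝕜) : (fderiv 𝕜 (fun y' => y' * e + c) y).det = ∏ i, e i := by
  classical
  let D : (ι → 𝕜) →L[𝕜] (ι → 𝕜) := (ContinuousLinearMap.mul 𝕜 (ι → 𝕜)).flip e
  have hD_diag : (D : (ι → 𝕜) →ₗ[𝕜] (ι → 𝕜)) = Matrix.toLin' (Matrix.diagonal e) := by
    ext y' i
    simp [D, Matrix.mulVec_diagonal]
  rw [show (fun y' => y' * e + c) = fun y' => D y' + c from rfl, fderiv_add_const, D.fderiv,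
    ContinuousLinearMap.det, hD_diag, LinearMap.det_toLin', Matrix.det_diagonal]

/-- The Jacobian determinant of an affine coupling layer equals
`∏ j exp(s_j(x₁)) = exp(∑ j s_j(x₁))`; in particular it is positive and its log is
`∑ j s_j(x₁)`. -/
theorem affine_coupling_det (m : ℕ) (s t : (Fin m → ℝ) → (Fin m → ℝ))
    (hs : Differentiable ℝ s) (ht : Differentiable ℝ t)
    (F : (Fin m → ℝ) × (Fin m → ℝ) → (Fin m → ℝ) × (Fin m → ℝ))
    (hF : ∀ x₁ x₂ : Fin m → ℝ,
      F (x₁, x₂) = (x₁, fun j => x₂ j * Real.exp (s x₁ j) + t x₁ j))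
    (x₁ x₂ : Fin m → ℝ) :
    DifferentiableAt ℝ F (x₁, x₂) ∧
    (fderiv ℝ F (x₁, x₂)).det = ∏ j, Real.exp (s x₁ j) ∧
    (fderiv ℝ F (x₁, x₂)).det = Real.exp (∑ j, s x₁ j) ∧
    0 < (fderiv ℝ F (x₁, x₂)).det ∧
    Real.log ((fderiv ℝ F (x₁, x₂)).det) = ∑ j, s x₁ j := by
  have hF_eq : F = fun p => (p.1, fun j => p.2 j * Real.exp (s p.1 j) + t p.1 j) :=
    funext fun p => hF p.1 p.2
  have hdiff : DifferentiableAt ℝ F (x₁, x₂) := by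
    rw [hF_eq]
    fun_prop
  have hdet : (fderiv ℝ F (x₁, x₂)).det = ∏ j, Real.exp (s x₁ j) := by
    have hfiber :
        (fun y => (F (x₁, y)).2) = fun y => y * (fun j => Real.exp (s x₁ j)) + t x₁ :=
      funext fun y => by rw [hF]; rfl
    rw [det_fderiv_eq_det_fderiv_snd_of_fst_eq hdiff (by simp [hF_eq]), hfiber]
    exact det_fderiv_mul_add_const (fun j => Real.exp (s x₁ j)) (t x₁) x₂
  refine ⟨hdiff, hdet, ?_, ?_, ?_⟩
  · rw [hdet, Real.exp_sum]
  · rw [hdet]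
    positivity
  · rw [hdet, ← Real.exp_sum, Real.log_exp]
end
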